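/- Let n ≥ 1, let λ be a partition with l(λ) = n, and let μ ⊆ λ be a partition with l(μ) = n−1. Then the following identity holds in the field ℚ(t) of rational functions: (b_μ(t²)/b_λ(t²)) · Σ_β φ_{λ/β}(t²) · t^{2(|β|−|μ|)} · sk_{β/μ}(t²) = t^{2·Σ_{j≥1} C(λ'_j − μ'_j, 2)} · ∏_{j≥1} binom(λ'_j − μ'_{j+1}, λ'_j − λ'_{j+1})_{t²}, where the sum is over all partitions β with μ ⊆ β, β ≼ λ (i.e. λ/β is a horizontal strip), and l(β) ≤ n−1. (The left-hand side is the q → 0 limit of the Gelfand–Tsetlin branching coefficient c_{λ,μ}(q,t) of the Etingof–Kirillov trace function, and the right-hand side is its closed product form.) -/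

import Mathlib

open scoped BigOperators Classical

namespace EK

/-- Conjugate partition: `conj f j = #{i : f i ≥ j}` (parts of `f` are `f 0, f 1, …`,
i.e. `f i = λ_{i+1}`). -/
noncomputable def conj (f : ℕ → ℕ) (j : ℕ) : ℕ := Nat.card {i : ℕ // j ≤ f i}

/-- `f` represents a partition: weakly decreasing with finitely many nonzero parts. -/
def IsPartition (f : ℕ → ℕ) : Prop := Antitone f ∧ ∃ N, ∀ i, N ≤ i → f i = 0

/-- `l(f) = n`: the first `n` parts are positive, the rest vanish. -/
def HasLength (f : ℕ → ℕ) (n : ℕ) : Prop := (∀ i < n, 0 < f i) ∧ ∀ i, n ≤ i → f i = 0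

/-- `|λ| = Σ_i λ_i`. -/
noncomputable def psize (f : ℕ → ℕ) : ℕ := ∑ᶠ i, f i

/-- `n(λ) = Σ_{i ≥ 1} (i-1) λ_i` (0-indexed: `Σ_i i * f i`). -/
noncomputable def nstat (f : ℕ → ℕ) : ℕ := ∑ᶠ i, i * f i

/-- `φ_r(u) = ∏_{i=1}^r (1 - u^i)`. -/
def phiPoch {F : Type*} [Field F] (u : F) (r : ℕ) : F := ∏ i ∈ Finset.Icc 1 r, (1 - u ^ i)

/-- Gaussian binomial `binom(a,b)_u = φ_a(u)/(φ_b(u) φ_{a-b}(u))` for `0 ≤ b ≤ a`, `0` otherwise. -/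
noncomputable def gauss {F : Type*} [Field F] (u : F) (a b : ℤ) : F :=
  if 0 ≤ b ∧ b ≤ a then phiPoch u a.toNat / (phiPoch u b.toNat * phiPoch u (a - b).toNat)
  else 0

/-- `sk_{λ/μ}(u) = u^{Σ_{j≥1} C(λ'_j - μ'_j, 2)} ∏_{j≥1} binom(λ'_j - μ'_{j+1}, m_j(μ))_u`
(the factors for `j > λ_1` are all `1` and the exponents vanish there, so the product and
sum are taken over `1 ≤ j ≤ λ_1 = f 0`). -/
noncomputable def sk {F : Type*} [Field F] (u : F) (f g : ℕ → ℕ) : F :=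
  u ^ (∑ j ∈ Finset.Icc 1 (f 0), Nat.choose (conj f j - conj g j) 2) *
    ∏ j ∈ Finset.Icc 1 (f 0),
      gauss u ((conj f j : ℤ) - (conj g (j + 1) : ℤ)) ((conj g j : ℤ) - (conj g (j + 1) : ℤ))

/-- `μ ⊆ λ` and `λ/μ` is a horizontal strip, i.e. `λ'_j - μ'_j ∈ {0,1}` for all `j ≥ 1`. -/
def IsHStrip (f g : ℕ → ℕ) : Prop :=
  (∀ i, g i ≤ f i) ∧ ∀ j, 1 ≤ j → conj f j ≤ conj g j + 1

/-- `φ_{λ/μ}(u) = ∏_{j ≥ 1, λ'_j = μ'_j + 1, λ'_{j+1} = μ'_{j+1}} (1 - u^{m_j(λ)})` if `λ/μ` is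
a horizontal strip, and `0` otherwise (factors with `j > λ_1` never occur). -/
noncomputable def phiStrip {F : Type*} [Field F] (u : F) (f g : ℕ → ℕ) : F :=
  if IsHStrip f g then
    ∏ j ∈ (Finset.Icc 1 (f 0)).filter
        (fun j => conj f j = conj g j + 1 ∧ conj f (j + 1) = conj g (j + 1)),
      (1 - u ^ (conj f j - conj f (j + 1)))
  else 0

/-- `b_λ(u) = ∏_{i ≥ 1} φ_{m_i(λ)}(u)` (factors with `i > λ_1` are `1`). -/
noncomputable def bcoef {F : Type*} [Field F] (u : F) (f : ℕ → ℕ) : F :=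
  ∏ i ∈ Finset.Icc 1 (f 0), phiPoch u (conj f i - conj f (i + 1))


/-!
Write `a = λ'`, `b = μ'`. Every `β` in the sum arises from `λ` by removing the bottom cell of
column `1` (forced by `l(β) = n - 1`) and of a set of further columns, and each factor of the
summand (`φ_{λ/β}`, `u^{|β|-|μ|}`, `sk_{β/μ}`) is a product over columns `j` of a weight depending
only on whether columns `j` and `j + 1` are shortened. Sets of columns that do not give a
partition `β ⊇ μ` have weight zero, so the sum is a transfer-matrix sum over all sets of columns.
The boundary vector `(1 - u^{a_j - b_j}, u^{a_j - b_j})` is reproduced by the transfer matrix up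
to the scalar `u^{C(a_j - b_j, 2)} φ_{a_j - b_{j+1}} / (φ_{a_j - b_j} φ_{b_j - b_{j+1}})`, so the
sum is a product, which `b_μ / b_λ` turns into the Gaussian binomials by telescoping.
-/

open Finset

variable {f g : ℕ → ℕ}

theorem IsPartition.le_iff_lt_conj (hf : IsPartition f) {j : ℕ} (hj : 1 ≤ j) (i : ℕ) :
    j ≤ f i ↔ i < conj f j := by
  obtain ⟨N, hN⟩ := hf.2
  have hex : ∃ m, f m < j := ⟨N, by rw [hN N le_rfl]; omega⟩
  have hiff : ∀ i, j ≤ f i ↔ i < Nat.find hex := fun i =>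
    ⟨fun h => by_contra fun h' =>
      absurd (hf.1 (not_lt.mp h')) (by have := Nat.find_spec hex; omega),
     fun h => not_lt.mp (Nat.find_min hex h)⟩
  have hconj : conj f j = Nat.find hex := by
    rw [conj, show {i : ℕ // j ≤ f i} = {i : ℕ // i < Nat.find hex} by simp only [hiff],
      ← Nat.card_congr Fin.equivSubtype, Nat.card_eq_fintype_card, Fintype.card_fin]
  rw [hconj, hiff]

theorem IsPartition.conj_le_conj (hf : IsPartition f) (hg : IsPartition g)
    (hle : ∀ i, g i ≤ f i) {j : ℕ} (hj : 1 ≤ j) : conj g j ≤ conj f j := by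
  by_contra! h
  have := (hg.le_iff_lt_conj hj _).mpr h
  exact lt_irrefl _ ((hf.le_iff_lt_conj hj _).mp (this.trans (hle _)))

theorem IsPartition.conj_le_conj_of_le (hf : IsPartition f) {j j' : ℕ} (hj : 1 ≤ j)
    (hjj' : j ≤ j') : conj f j' ≤ conj f j := by
  by_contra! h
  have := (hf.le_iff_lt_conj (hj.trans hjj') _).mpr h
  exact lt_irrefl _ ((hf.le_iff_lt_conj hj _).mp (hjj'.trans this))

theorem IsPartition.conj_eq_zero (hf : IsPartition f) {j : ℕ} (hj : f 0 < j) :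
    conj f j = 0 := by
  by_contra h
  have := (hf.le_iff_lt_conj (j := j) (by omega) 0).mpr (Nat.pos_of_ne_zero h)
  omega

theorem IsPartition.one_le_conj (hf : IsPartition f) {j : ℕ} (hj : 1 ≤ j) (hjf : j ≤ f 0) :
    1 ≤ conj f j :=
  (hf.le_iff_lt_conj hj 0).mp hjf

theorem IsPartition.conj_le (hf : IsPartition f) {n : ℕ} (hn : ∀ i, n ≤ i → f i = 0) {j : ℕ}
    (hj : 1 ≤ j) : conj f j ≤ n := by
  by_contra! h
  have := (hf.le_iff_lt_conj hj n).mpr h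
  rw [hn n le_rfl] at this
  omega

theorem HasLength.conj_one {n : ℕ} (hfl : HasLength f n) (hf : IsPartition f) :
    conj f 1 = n :=
  eq_of_forall_lt_iff fun i => by
    rw [← hf.le_iff_lt_conj le_rfl]
    refine ⟨fun h => by_contra fun h' => ?_, hfl.1 i⟩
    rw [hfl.2 i (not_lt.mp h')] at h
    omega

theorem IsPartition.conj_succ (hf : IsPartition f) : IsPartition (fun j => conj f (j + 1)) :=
  ⟨fun _ _ h => hf.conj_le_conj_of_le (by omega) (by omega),
    ⟨f 0, fun _ hi => hf.conj_eq_zero (by omega)⟩⟩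

/-- The partition whose columns have heights `c 1, c 2, …` (the value `c 0` is ignored). -/
noncomputable def rows (c : ℕ → ℕ) (i : ℕ) : ℕ := conj (fun j => c (j + 1)) (i + 1)

section rows

variable {c : ℕ → ℕ} (hc : IsPartition (fun j => c (j + 1)))
include hc

theorem isPartition_rows : IsPartition (rows c) :=
  ⟨fun _ _ h => hc.conj_le_conj_of_le (by omega) (by omega),
    ⟨c 1, fun _ hi => hc.conj_eq_zero (by simp only [zero_add]; omega)⟩⟩

theorem rows_eq_zero {i : ℕ} (hi : c 1 ≤ i) : rows c i = 0 :=
  hc.conj_eq_zero (by simp only [zero_add]; omega)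

theorem conj_rows {j : ℕ} (hj : 1 ≤ j) : conj (rows c) j = c j :=
  eq_of_forall_lt_iff fun i => by
    obtain ⟨k, rfl⟩ := Nat.exists_eq_add_of_le' hj
    rw [← (isPartition_rows hc).le_iff_lt_conj hj, rows, Nat.add_one_le_iff,
      ← hc.le_iff_lt_conj (by omega)]
    omega

end rows

theorem IsPartition.rows_conj (hf : IsPartition f) (i : ℕ) : rows (conj f) i = f i :=
  eq_of_forall_lt_iff fun k => by
    rw [rows, ← hf.conj_succ.le_iff_lt_conj (by omega), Nat.add_one_le_iff,
      ← hf.le_iff_lt_conj (by omega)]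
    omega

theorem IsPartition.psize_eq_sum_conj (hf : IsPartition f) {M : ℕ} (hM : f 0 ≤ M) :
    psize f = ∑ j ∈ Icc 1 M, conj f j := by
  have hsupp : Function.support f ⊆ range (conj f 1) := fun i hi => by
    simpa [← hf.le_iff_lt_conj le_rfl, Nat.one_le_iff_ne_zero] using hi
  have hrow : ∀ i, f i = #{j ∈ Icc 1 M | i < conj f j} := fun i => by
    rw [filter_congr fun j hj => (hf.le_iff_lt_conj (mem_Icc.mp hj).1 i).symm,
      show {j ∈ Icc 1 M | j ≤ f i} = Icc 1 (f i) by
        ext j; simp only [mem_filter, mem_Icc]; have := hf.1 (Nat.zero_le i); omega]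
    simp
  rw [psize, finsum_eq_finsetSum_of_support_subset f hsupp, sum_congr rfl fun i _ => hrow i]
  simp only [card_filter]
  rw [sum_comm]
  refine sum_congr rfl fun j hj => ?_
  rw [← card_filter, show {i ∈ range (conj f 1) | i < conj f j} =
    range (conj f j) by
      ext i; have := hf.conj_le_conj_of_le le_rfl (mem_Icc.mp hj).1
      simp only [mem_filter, mem_range]; omega]
  simp

theorem prod_Icc_eq_mul_prod_Icc_succ {M : Type*} [CommMonoid M] (h : ℕ → M) {lo J : ℕ}
    (hlo : lo ≤ J) : ∏ j ∈ Icc lo J, h j = h lo * ∏ j ∈ Icc (lo + 1) J, h j := by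
  rw [← insert_Icc_add_one_left_eq_Icc hlo, prod_insert (by simp)]

theorem prod_Icc_succ_mul {M : Type*} [CommMonoid M] (h : ℕ → M) (J : ℕ) :
    (∏ j ∈ Icc 1 J, h (j + 1)) * h 1 = h (J + 1) * ∏ j ∈ Icc 1 J, h j := by
  induction J with
  | zero => simp [mul_comm]
  | succ J ih =>
    rw [prod_Icc_succ_top (by omega), prod_Icc_succ_top (by omega), mul_right_comm, ih,
      mul_comm (h (J + 1 + 1)), mul_assoc, ← mul_assoc, mul_comm (h (J + 1))]

variable {F : Type*} [Field F]

theorem phiPoch_zero (u : F) : phiPoch u 0 = 1 := by simp [phiPoch]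

theorem phiPoch_succ (u : F) (r : ℕ) : phiPoch u (r + 1) = phiPoch u r * (1 - u ^ (r + 1)) :=
  prod_Icc_succ_top (by omega) _

theorem pow_ne_one_of_not_isOfFinOrder {u : F} (hu : ¬IsOfFinOrder u) {i : ℕ} (hi : 1 ≤ i) :
    u ^ i ≠ 1 :=
  fun h => hu (isOfFinOrder_iff_pow_eq_one.mpr ⟨i, hi, h⟩)

theorem phiPoch_ne_zero {u : F} (hu : ¬IsOfFinOrder u) (r : ℕ) : phiPoch u r ≠ 0 :=
  prod_ne_zero_iff.mpr fun _ hi =>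
    sub_ne_zero.mpr (pow_ne_one_of_not_isOfFinOrder hu (mem_Icc.mp hi).1).symm

theorem gauss_natCast (u : F) {A B : ℕ} (h : B ≤ A) :
    gauss u A B = phiPoch u A / (phiPoch u B * phiPoch u (A - B)) := by
  rw [gauss, if_pos ⟨by positivity, by exact_mod_cast h⟩, ← Nat.cast_sub h]
  simp

theorem gauss_of_lt (u : F) {A B : ℤ} (h : A < B) : gauss u A B = 0 :=
  if_neg (by omega)

/-- The weight of column `j` of `β/μ` in `λ`, where `a = λ'`, `b = μ'`, and `e`, `e'` say whether
the columns `j`, `j + 1` of `β` are one shorter than those of `λ`. The three factors are the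
contributions of column `j` to `φ_{λ/β}`, to `u^{|β|-|μ|}` and to `sk_{β/μ}`. -/
noncomputable def colWeight (u : F) (a b : ℕ → ℕ) (j : ℕ) (e e' : Bool) : F :=
  (if e && !e' then 1 - u ^ (a j - a (j + 1)) else 1) *
    (u ^ ((a j - e.toNat - b j) + (a j - e.toNat - b j).choose 2) *
      gauss u ((a j : ℤ) - e.toNat - b (j + 1)) ((b j : ℤ) - b (j + 1)))

noncomputable def boundaryWeight (u : F) (a b : ℕ → ℕ) (j : ℕ) (e : Bool) : F :=
  if e then 1 - u ^ (a j - b j) else u ^ (a j - b j)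

noncomputable def colFactor (u : F) (a b : ℕ → ℕ) (j : ℕ) : F :=
  u ^ (a j - b j).choose 2 *
    (phiPoch u (a j - b (j + 1)) / (phiPoch u (a j - b j) * phiPoch u (b j - b (j + 1))))

/-- Summing out the state of column `j + 1` against the boundary weights gives the boundary weight
of column `j` times `colFactor`: this collapses `transferSum` into a product. -/
theorem colWeight_transfer {u : F} (hu : ¬IsOfFinOrder u) {a b : ℕ → ℕ} {j : ℕ}
    (ha : a (j + 1) ≤ a j) (hb : b (j + 1) ≤ b j) (hba : b j ≤ a j) (hba' : b (j + 1) ≤ a (j + 1))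
    (e : Bool) :
    colWeight u a b j e true * boundaryWeight u a b (j + 1) true +
        colWeight u a b j e false * boundaryWeight u a b (j + 1) false =
      boundaryWeight u a b j e * colFactor u a b j := by
  have hne := phiPoch_ne_zero hu
  simp only [colWeight, boundaryWeight, colFactor, Bool.and_true, Bool.and_false, Bool.not_true,
    Bool.not_false, Bool.false_eq_true, if_true, if_false]
  cases e with
  | false =>
    simp only [Bool.toNat_false, Nat.sub_zero, Nat.cast_zero, sub_zero, if_false,
      Bool.false_eq_true, one_mul]
    rw [← Nat.cast_sub (by omega), ← Nat.cast_sub hb, gauss_natCast u (by omega),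
      show a j - b (j + 1) - (b j - b (j + 1)) = a j - b j by omega, pow_add]
    field_simp
    ring
  | true =>
    simp only [Bool.toNat_true, Nat.cast_one, if_true]
    rcases Nat.eq_or_lt_of_le hba with hab | hab
    · rw [gauss_of_lt u (by omega), hab]
      simp
    rw [show (a j : ℤ) - 1 - b (j + 1) = ((a j - 1 - b (j + 1) : ℕ) : ℤ) by omega,
      ← Nat.cast_sub hb, gauss_natCast u (by omega),
      show a j - 1 - b (j + 1) - (b j - b (j + 1)) = a j - b j - 1 by omega,
      show a j - 1 - b j = a j - b j - 1 by omega]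
    obtain ⟨d, hd⟩ : ∃ d, a j - b j = d + 1 := ⟨a j - b j - 1, by omega⟩
    have htop : a j - b (j + 1) = (a j - 1 - b (j + 1)) + 1 := by omega
    have hsplit : u ^ (a j - 1 - b (j + 1) + 1) =
        u ^ (a j - a (j + 1)) * u ^ (a (j + 1) - b (j + 1)) := by
      rw [← pow_add]; congr 1; omega
    rw [hd, Nat.add_sub_cancel, htop, phiPoch_succ, phiPoch_succ, hsplit,
      Nat.choose_succ_succ', Nat.choose_one_right, pow_add]
    have := hne (a j - 1 - b (j + 1))
    have := hne d
    have := hne (b j - b (j + 1))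
    have := hne (a (j + 1) - b (j + 1))
    have : (1 : F) - u ^ (d + 1) ≠ 0 :=
      sub_ne_zero.mpr (pow_ne_one_of_not_isOfFinOrder hu (by omega)).symm
    field_simp
    ring

/-- `T` is the set of columns of `β` that are one shorter than those of `λ`. -/
noncomputable def colProduct (u : F) (a b : ℕ → ℕ) (T : Finset ℕ) (lo J : ℕ) : F :=
  ∏ j ∈ Icc lo J, colWeight u a b j (j ∈ T) (j + 1 ∈ T)

noncomputable def transferSum (u : F) (a b : ℕ → ℕ) (lo J : ℕ) (e : Bool) : F :=
  ∑ S ∈ (Icc (lo + 1) J).powerset, colProduct u a b (bif e then insert lo S else S) lo J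

theorem colProduct_eq_mul {u : F} {a b : ℕ → ℕ} {lo J : ℕ} (hlo : lo ≤ J) {S : Finset ℕ}
    (hS : S ⊆ Icc (lo + 1) J) (e : Bool) :
    colProduct u a b (bif e then insert lo S else S) lo J =
      colWeight u a b lo e (lo + 1 ∈ S) * colProduct u a b S (lo + 1) J := by
  have hmem : ∀ k, lo < k → (k ∈ (bif e then insert lo S else S) ↔ k ∈ S) := fun k hk => by
    cases e <;> simp [Nat.ne_of_gt hk]
  have hloS : lo ∉ S := fun h => by have := mem_Icc.mp (hS h); omega
  rw [colProduct, prod_Icc_eq_mul_prod_Icc_succ _ hlo, colProduct]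
  congr 1
  · cases e <;> simp [hloS]
  · exact prod_congr rfl fun k hk => by
      have := (mem_Icc.mp hk).1
      simp only [hmem k (by omega), hmem (k + 1) (by omega)]

theorem transferSum_self (u : F) (a b : ℕ → ℕ) (J : ℕ) (e : Bool) :
    transferSum u a b J J e = colWeight u a b J e false := by
  rw [transferSum, Icc_eq_empty (by omega), powerset_empty, sum_singleton,
    colProduct_eq_mul le_rfl (empty_subset _), colProduct, Icc_eq_empty (by omega)]
  simp

theorem transferSum_eq_add {u : F} {a b : ℕ → ℕ} {lo J : ℕ} (hlo : lo + 1 ≤ J) (e : Bool) :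
    transferSum u a b lo J e =
      colWeight u a b lo e true * transferSum u a b (lo + 1) J true +
        colWeight u a b lo e false * transferSum u a b (lo + 1) J false := by
  rw [transferSum, ← insert_Icc_add_one_left_eq_Icc hlo, sum_powerset_insert (by simp),
    add_comm, transferSum, transferSum, mul_sum, mul_sum]
  congr 1 <;> refine sum_congr rfl fun S hS => ?_
  · have hS : S ⊆ Icc (lo + 1) J := (mem_powerset.mp hS).trans (Icc_subset_Icc_left (by omega))
    rw [colProduct_eq_mul (by omega) (insert_subset (by simp; omega) hS)]
    simp
  · have hS' : S ⊆ Icc (lo + 1) J := (mem_powerset.mp hS).trans (Icc_subset_Icc_left (by omega))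
    have : lo + 1 ∉ S := fun h => by have := mem_Icc.mp (mem_powerset.mp hS h); omega
    rw [colProduct_eq_mul (by omega) hS']
    simp [this]

theorem transferSum_eq_prod {u : F} (hu : ¬IsOfFinOrder u) {a b : ℕ → ℕ} {J : ℕ}
    (ha : ∀ j, 1 ≤ j → a (j + 1) ≤ a j) (hb : ∀ j, 1 ≤ j → b (j + 1) ≤ b j)
    (hba : ∀ j, 1 ≤ j → b j ≤ a j) (haJ : a (J + 1) = 0) {lo : ℕ} (hlo : 1 ≤ lo)
    (hloJ : lo ≤ J) (e : Bool) :
    transferSum u a b lo J e = boundaryWeight u a b lo e * ∏ k ∈ Icc lo J, colFactor u a b k := by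
  induction hloJ using Nat.decreasingInduction generalizing e with
  | self =>
    have hbJ : b (J + 1) = 0 := by have := hba (J + 1) (by omega); omega
    have := colWeight_transfer hu (ha J hlo) (hb J hlo) (hba J hlo) (by omega) e (u := u)
    simp only [boundaryWeight, haJ, hbJ, Nat.sub_self, pow_zero, sub_self, mul_zero, zero_add,
      mul_one, if_true, Bool.false_eq_true, if_false] at this
    rw [transferSum_self, this, Icc_self, prod_singleton, boundaryWeight]
  | of_succ lo hloJ ih =>
    rw [transferSum_eq_add hloJ, ih (by omega), ih (by omega), ← mul_assoc, ← mul_assoc, ← add_mul,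
      colWeight_transfer hu (ha lo hlo) (hb lo hlo) (hba lo hlo) (hba (lo + 1) (by omega)),
      prod_Icc_eq_mul_prod_Icc_succ _ hloJ.le, mul_assoc]

section summand

variable {β : ℕ → ℕ} (hβ : IsPartition β) (hg : IsPartition g) (hgβ : ∀ i, g i ≤ β i)
include hβ hg hgβ

theorem psize_sub_psize_eq_sum {M : ℕ} (hM : β 0 ≤ M) :
    psize β - psize g = ∑ j ∈ Icc 1 M, (conj β j - conj g j) := by
  rw [hβ.psize_eq_sum_conj hM, hg.psize_eq_sum_conj ((hgβ 0).trans hM),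
    sum_tsub_distrib _ fun j hj => hβ.conj_le_conj hg hgβ (mem_Icc.mp hj).1]

theorem sk_eq_prod_Icc (u : F) {M : ℕ} (hM : β 0 ≤ M) :
    sk u β g = u ^ (∑ j ∈ Icc 1 M, (conj β j - conj g j).choose 2) *
      ∏ j ∈ Icc 1 M,
        gauss u ((conj β j : ℤ) - conj g (j + 1)) ((conj g j : ℤ) - conj g (j + 1)) := by
  have hzero : ∀ j ∈ Icc 1 M, j ∉ Icc 1 (β 0) →
      conj β j = 0 ∧ conj g j = 0 ∧ conj g (j + 1) = 0 := fun j hj hj' => by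
    simp only [mem_Icc] at hj hj'
    have h1 := hβ.conj_eq_zero (j := j) (by omega)
    have h2 := hβ.conj_le_conj hg hgβ (j := j) (by omega)
    have h3 := hg.conj_le_conj_of_le (j := j) (j' := j + 1) (by omega) (by omega)
    omega
  have hsub : Icc 1 (β 0) ⊆ Icc 1 M := Icc_subset_Icc_right hM
  rw [sk, sum_subset hsub fun j hj hj' => ?_, prod_subset hsub fun j hj hj' => ?_] <;>
    obtain ⟨h1, h2, h3⟩ := hzero j hj hj' <;> simp [h1, h2, h3, gauss, phiPoch_zero]

end summand

/-- The factor of column `j` in the summand of `β`, where `a = λ'`, `b = μ'`, `c = β'`. -/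
noncomputable def columnTerm (u : F) (a b c : ℕ → ℕ) (j : ℕ) : F :=
  (if a j = c j + 1 ∧ a (j + 1) = c (j + 1) then 1 - u ^ (a j - a (j + 1)) else 1) *
    (u ^ ((c j - b j) + (c j - b j).choose 2) *
      gauss u ((c j : ℤ) - b (j + 1)) ((b j : ℤ) - b (j + 1)))

theorem summand_eq_prod_columnTerm (u : F) {β : ℕ → ℕ} (hβ : IsPartition β) (hg : IsPartition g)
    (hgβ : ∀ i, g i ≤ β i) (hstrip : IsHStrip f β) :
    phiStrip u f β * u ^ (psize β - psize g) * sk u β g =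
      ∏ j ∈ Icc 1 (f 0), columnTerm u (conj f) (conj g) (conj β) j := by
  rw [phiStrip, if_pos hstrip, prod_filter, psize_sub_psize_eq_sum hβ hg hgβ (hstrip.1 0),
    sk_eq_prod_Icc hβ hg hgβ u (hstrip.1 0), ← prod_pow_eq_pow_sum, ← prod_pow_eq_pow_sum,
    mul_assoc, ← prod_mul_distrib, ← prod_mul_distrib, ← prod_mul_distrib]
  refine prod_congr rfl fun j _ => ?_
  rw [columnTerm, pow_add, mul_assoc]

def shortenCols (a : ℕ → ℕ) (T : Finset ℕ) (j : ℕ) : ℕ := a j - if j ∈ T then 1 else 0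

noncomputable def shorten (a : ℕ → ℕ) (T : Finset ℕ) : ℕ → ℕ := rows (shortenCols a T)

def Admissible (a b : ℕ → ℕ) (T : Finset ℕ) : Prop :=
  ∀ j, 1 ≤ j → b j ≤ shortenCols a T j ∧ shortenCols a T (j + 1) ≤ shortenCols a T j

theorem columnTerm_shortenCols (u : F) {a : ℕ → ℕ} (b : ℕ → ℕ) {T : Finset ℕ}
    (hT : ∀ k ∈ T, 1 ≤ a k) (j : ℕ) :
    columnTerm u a b (shortenCols a T) j = colWeight u a b j (j ∈ T) (j + 1 ∈ T) := by
  have hstrip : (a j = shortenCols a T j + 1 ∧ a (j + 1) = shortenCols a T (j + 1)) ↔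
      (j ∈ T ∧ j + 1 ∉ T) := by
    have h₁ := hT j; have h₂ := hT (j + 1)
    by_cases hj : j ∈ T <;> by_cases hj' : j + 1 ∈ T <;> simp [shortenCols, hj, hj'] at h₁ h₂ ⊢ <;>
      omega
  have hgauss : ((shortenCols a T j : ℕ) : ℤ) = a j - (decide (j ∈ T)).toNat := by
    have h₁ := hT j
    by_cases hj : j ∈ T <;> simp [shortenCols, hj] at h₁ ⊢; omega
  have hexp : shortenCols a T j - b j = a j - (decide (j ∈ T)).toNat - b j := by
    by_cases hj : j ∈ T <;> simp [shortenCols, hj]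
  simp only [columnTerm, colWeight, hgauss, hexp, hstrip]
  congr 1
  by_cases hj : j ∈ T <;> by_cases hj' : j + 1 ∈ T <;> simp [hj, hj']

theorem colWeight_true_eq_zero {u : F} {a b : ℕ → ℕ} {j : ℕ} (h : b j = a j) (e' : Bool) :
    colWeight u a b j true e' = 0 := by
  rw [colWeight, gauss_of_lt u (by simp [h]), mul_zero, mul_zero]

theorem colWeight_true_false_eq_zero {u : F} {a b : ℕ → ℕ} {j : ℕ} (h : a (j + 1) = a j) :
    colWeight u a b j true false = 0 := by
  simp [colWeight, h]

/-- A violation of admissibility forces column `j` to be shortened. Then either `b j = a j`, which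
kills the Gaussian binomial of `colWeight`, or column `j + 1` is not shortened and
`a (j + 1) = a j`, which kills its strip factor `1 - u ^ 0`. -/
theorem colProduct_eq_zero (u : F) {a b : ℕ → ℕ} {J : ℕ} (ha : ∀ j, 1 ≤ j → a (j + 1) ≤ a j)
    (hba : ∀ j, 1 ≤ j → b j ≤ a j) {T : Finset ℕ} (hT : T ⊆ Icc 1 J) (hadm : ¬Admissible a b T) :
    colProduct u a b T 1 J = 0 := by
  simp only [Admissible, not_forall, not_and_or, not_le] at hadm
  obtain ⟨j, hj, hlt | hlt⟩ := hadm
  all_goals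
    have := ha j hj; have := hba j hj
    have hjT : j ∈ T := by_contra fun hjT => by simp [shortenCols, hjT] at hlt; omega
    refine prod_eq_zero (hT hjT) ?_
    simp only [hjT, decide_true]
  · exact colWeight_true_eq_zero (by simp [shortenCols, hjT] at hlt; omega) _
  · have hj' : j + 1 ∉ T := fun h => by simp [shortenCols, hjT, h] at hlt; omega
    simp only [hj', decide_false]
    exact colWeight_true_false_eq_zero (by simp [shortenCols, hjT, hj'] at hlt; omega)

section shorten

variable {T : Finset ℕ} (hf : IsPartition f) (hT : Admissible (conj f) (conj g) T)
include hf hT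

theorem isPartition_shortenCols_succ : IsPartition (fun j => shortenCols (conj f) T (j + 1)) :=
  ⟨antitone_nat_of_succ_le fun j => (hT (j + 1) (by omega)).2,
    ⟨f 0, fun j hj => by simp [shortenCols, hf.conj_eq_zero (j := j + 1) (by omega)]⟩⟩

theorem conj_shorten {j : ℕ} (hj : 1 ≤ j) :
    conj (shorten (conj f) T) j = shortenCols (conj f) T j :=
  conj_rows (isPartition_shortenCols_succ hf hT) hj

theorem isPartition_shorten : IsPartition (shorten (conj f) T) :=
  isPartition_rows (isPartition_shortenCols_succ hf hT)

theorem le_shorten (hg : IsPartition g) (i : ℕ) : g i ≤ shorten (conj f) T i := by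
  rw [← hg.rows_conj i]
  exact (isPartition_shortenCols_succ hf hT).conj_le_conj hg.conj_succ
    (fun j => (hT (j + 1) (by omega)).1) (by omega)

theorem isHStrip_shorten : IsHStrip f (shorten (conj f) T) := by
  refine ⟨fun i => ?_, fun j hj => ?_⟩
  · rw [← hf.rows_conj i]
    exact hf.conj_succ.conj_le_conj (isPartition_shortenCols_succ hf hT)
      (fun j => Nat.sub_le _ _) (by omega)
  · rw [conj_shorten hf hT hj, shortenCols]
    split_ifs <;> omega

theorem shorten_eq_zero {n : ℕ} (hfl : HasLength f n) (h1 : 1 ∈ T) {i : ℕ} (hi : n - 1 ≤ i) :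
    shorten (conj f) T i = 0 :=
  rows_eq_zero (isPartition_shortenCols_succ hf hT) (by simp [shortenCols, hfl.conj_one hf, h1, hi])

theorem summand_shorten (u : F) (hg : IsPartition g) (hTf : T ⊆ Icc 1 (f 0)) :
    phiStrip u f (shorten (conj f) T) * u ^ (psize (shorten (conj f) T) - psize g) *
        sk u (shorten (conj f) T) g = colProduct u (conj f) (conj g) T 1 (f 0) := by
  rw [summand_eq_prod_columnTerm u (isPartition_shorten hf hT) hg (le_shorten hf hT hg)
    (isHStrip_shorten hf hT)]
  refine prod_congr rfl fun j hj => ?_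
  have hj := (mem_Icc.mp hj).1
  rw [← columnTerm_shortenCols u _ fun k hk => hf.one_le_conj (mem_Icc.mp (hTf hk)).1
      (mem_Icc.mp (hTf hk)).2]
  simp only [columnTerm, conj_shorten hf hT hj, conj_shorten hf hT (Nat.le_succ_of_le hj)]

end shorten

noncomputable def shortColumns (f β : ℕ → ℕ) : Finset ℕ := {j ∈ Icc 2 (f 0) | conj β j ≠ conj f j}

section shortColumns

variable {n : ℕ} {β : ℕ → ℕ} (hf : IsPartition f) (hfl : HasLength f n) (hg : IsPartition g)
  (hgl : HasLength g (n - 1)) (hβ : IsPartition β) (hgβ : ∀ i, g i ≤ β i) (hstrip : IsHStrip f β)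
  (hβl : ∀ i, n - 1 ≤ i → β i = 0)
include hf hfl hg hgl hβ hgβ hstrip hβl

theorem shortenCols_shortColumns {j : ℕ} (hj : 1 ≤ j) :
    shortenCols (conj f) (insert 1 (shortColumns f β)) j = conj β j := by
  have hβf := hf.conj_le_conj hβ hstrip.1 hj
  have hfβ := hstrip.2 j hj
  rcases Nat.eq_or_lt_of_le hj with rfl | hj2
  · have := hβ.conj_le hβl le_rfl
    have := hβ.conj_le_conj hg hgβ le_rfl
    simp only [shortenCols, mem_insert_self, if_true, hfl.conj_one hf, hgl.conj_one hg] at *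
    omega
  · by_cases hjf : j ≤ f 0
    · have hmem : j ∈ shortColumns f β ↔ conj β j ≠ conj f j := by
        simp [shortColumns, hjf, Nat.succ_le_of_lt hj2]
      by_cases hβj : conj β j = conj f j
      · simp [shortenCols, hmem, hβj, Nat.ne_of_gt hj2]
      · simp [shortenCols, hmem, hβj, Nat.ne_of_gt hj2]
        omega
    · have := hf.conj_eq_zero (not_le.mp hjf)
      simp [shortenCols, shortColumns, hjf, this] at hβf ⊢
      omega

theorem admissible_shortColumns :
    Admissible (conj f) (conj g) (insert 1 (shortColumns f β)) := fun j hj => by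
  rw [shortenCols_shortColumns hf hfl hg hgl hβ hgβ hstrip hβl hj,
    shortenCols_shortColumns hf hfl hg hgl hβ hgβ hstrip hβl (Nat.le_succ_of_le hj)]
  exact ⟨hβ.conj_le_conj hg hgβ hj, hβ.conj_le_conj_of_le hj (Nat.le_succ j)⟩

theorem shorten_shortColumns : shorten (conj f) (insert 1 (shortColumns f β)) = β := by
  funext i
  rw [shorten, rows, ← hβ.rows_conj i, rows]
  simp only [shortenCols_shortColumns hf hfl hg hgl hβ hgβ hstrip hβl (Nat.le_add_left 1 _)]

end shortColumns

theorem shorten_insert_one_injOn (hf : IsPartition f) :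
    Set.InjOn (fun S => shorten (conj f) (insert 1 S))
      {S | S ⊆ Icc 2 (f 0) ∧ Admissible (conj f) (conj g) (insert 1 S)} := by
  rintro S ⟨hS, hadm⟩ S' ⟨hS', hadm'⟩ h
  have hcols : ∀ j ∈ Icc 2 (f 0), j ∈ S ↔ j ∈ S' := fun j hj => by
    obtain ⟨hj2, hjf⟩ := mem_Icc.mp hj
    have := hf.one_le_conj (j := j) (by omega) hjf
    have hc := congrArg (conj · j) h
    simp only [conj_shorten hf hadm (by omega : 1 ≤ j), conj_shorten hf hadm' (by omega : 1 ≤ j),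
      shortenCols, mem_insert, Nat.ne_of_gt hj2, false_or] at hc
    by_cases h1 : j ∈ S <;> by_cases h2 : j ∈ S' <;> simp [h1, h2] at hc ⊢ <;> omega
  ext j
  exact ⟨fun hj => (hcols j (hS hj)).mp hj, fun hj => (hcols j (hS' hj)).mpr hj⟩

theorem mem_image_shorten_iff {n : ℕ} (hf : IsPartition f) (hfl : HasLength f n)
    (hg : IsPartition g) (hgl : HasLength g (n - 1)) (β : ℕ → ℕ) :
    β ∈ {S ∈ (Icc 2 (f 0)).powerset | Admissible (conj f) (conj g) (insert 1 S)}.image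
        (fun S => shorten (conj f) (insert 1 S)) ↔
      IsPartition β ∧ (∀ i, g i ≤ β i) ∧ IsHStrip f β ∧ ∀ i, n - 1 ≤ i → β i = 0 := by
  refine ⟨fun hβ => ?_, fun ⟨hβ, hgβ, hstrip, hβl⟩ => mem_image.mpr ⟨shortColumns f β, ?_, ?_⟩⟩
  · obtain ⟨S, hS, rfl⟩ := mem_image.mp hβ
    have hadm := (mem_filter.mp hS).2
    exact ⟨isPartition_shorten hf hadm, le_shorten hf hadm hg, isHStrip_shorten hf hadm,
      fun i hi => shorten_eq_zero hf hadm hfl (mem_insert_self 1 S) hi⟩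
  · exact mem_filter.mpr ⟨mem_powerset.mpr (filter_subset _ _),
      admissible_shortColumns hf hfl hg hgl hβ hgβ hstrip hβl⟩
  · exact shorten_shortColumns hf hfl hg hgl hβ hgβ hstrip hβl

theorem finsum_summand_eq_transferSum (u : F) {n : ℕ} (hn : 1 ≤ n) (hf : IsPartition f)
    (hfl : HasLength f n) (hg : IsPartition g) (hgl : HasLength g (n - 1))
    (hsub : ∀ i, g i ≤ f i) :
    (∑ᶠ (β : ℕ → ℕ)
        (_ : IsPartition β ∧ (∀ i, g i ≤ β i) ∧ IsHStrip f β ∧ (∀ i, n - 1 ≤ i → β i = 0)),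
        phiStrip u f β * u ^ (psize β - psize g) * sk u β g) =
      transferSum u (conj f) (conj g) 1 (f 0) true := by
  have hf0 : 1 ≤ f 0 := hfl.1 0 (by omega)
  have hTf : ∀ S ⊆ Icc 2 (f 0), insert 1 S ⊆ Icc 1 (f 0) := fun S hS =>
    insert_subset (by simp [hf0]) (hS.trans (Icc_subset_Icc_left (by omega)))
  set A := {S ∈ (Icc 2 (f 0)).powerset | Admissible (conj f) (conj g) (insert 1 S)}
  have hA : ∀ S ∈ A, S ⊆ Icc 2 (f 0) ∧ Admissible (conj f) (conj g) (insert 1 S) := by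
    simp [A]
  calc _ = ∑ β ∈ A.image (fun S => shorten (conj f) (insert 1 S)),
        phiStrip u f β * u ^ (psize β - psize g) * sk u β g := by
        rw [← finsum_mem_coe_finset]
        exact finsum_congr fun β => finsum_congr_Prop
          (propext (mem_image_shorten_iff hf hfl hg hgl β).symm) fun _ => rfl
    _ = ∑ S ∈ A, colProduct u (conj f) (conj g) (insert 1 S) 1 (f 0) := by
        rw [sum_image fun S hS S' hS' => shorten_insert_one_injOn hf (hA S hS) (hA S' hS')]
        exact sum_congr rfl fun S hS => summand_shorten hf (hA S hS).2 u hg (hTf S (hA S hS).1)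
    _ = ∑ S ∈ (Icc 2 (f 0)).powerset, colProduct u (conj f) (conj g) (insert 1 S) 1 (f 0) :=
        sum_filter_of_ne fun S hS hne => by_contra fun hadm => hne <|
          colProduct_eq_zero u (fun j hj => hf.conj_le_conj_of_le hj (Nat.le_succ j))
            (fun j hj => hf.conj_le_conj hg hsub hj) (hTf S (mem_powerset.mp hS)) hadm
    _ = transferSum u (conj f) (conj g) 1 (f 0) true := rfl

theorem IsPartition.bcoef_eq_prod_Icc (u : F) (hf : IsPartition f) {M : ℕ} (hM : f 0 ≤ M) :
    bcoef u f = ∏ k ∈ Icc 1 M, phiPoch u (conj f k - conj f (k + 1)) := by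
  refine prod_subset (Icc_subset_Icc_right hM) fun k hk hk' => ?_
  simp only [mem_Icc, not_and, not_le] at hk hk'
  rw [hf.conj_eq_zero (hk' hk.1), hf.conj_eq_zero (by omega : f 0 < k + 1), phiPoch_zero]

theorem prod_div_mul_transfer_eq {u : F} (hu : ¬IsOfFinOrder u) {a b : ℕ → ℕ} {J : ℕ}
    (h1 : a 1 - b 1 = 1) (hJ : a (J + 1) - b (J + 1) = 0) :
    (∏ k ∈ Icc 1 J, phiPoch u (b k - b (k + 1))) / (∏ k ∈ Icc 1 J, phiPoch u (a k - a (k + 1))) *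
        (boundaryWeight u a b 1 true * ∏ k ∈ Icc 1 J, colFactor u a b k) =
      u ^ (∑ k ∈ Icc 1 J, (a k - b k).choose 2) *
        ∏ k ∈ Icc 1 J, phiPoch u (a k - b (k + 1)) /
          (phiPoch u (a k - a (k + 1)) * phiPoch u (a (k + 1) - b (k + 1))) := by
  have hne := phiPoch_ne_zero hu
  have htel := prod_Icc_succ_mul (fun k => phiPoch u (a k - b k)) J
  simp only [h1, hJ, phiPoch_zero, one_mul] at htel
  have hphi1 : phiPoch u 1 = 1 - u := by simp [phiPoch]
  have hprod : ∀ h : ℕ → F, (∀ k, h k ≠ 0) → ∏ k ∈ Icc 1 J, h k ≠ 0 :=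
    fun h hh => prod_ne_zero_iff.mpr fun k _ => hh k
  simp only [boundaryWeight, colFactor, if_true, h1, pow_one, prod_mul_distrib, prod_div_distrib,
    prod_pow_eq_pow_sum]
  rw [hphi1] at htel
  rw [← htel]
  have := hprod _ fun k => hne (a k - a (k + 1))
  have := hprod _ fun k => hne (b k - b (k + 1))
  have := hprod _ fun k => hne (a k - b k)
  have := hprod _ fun k => hne (a (k + 1) - b (k + 1))
  have : (1 : F) - u ≠ 0 := hphi1 ▸ hne 1
  field_simp

theorem branching_coefficient_eq {u : F} (hu : ¬IsOfFinOrder u) (n : ℕ) (hn : 1 ≤ n)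
    (f g : ℕ → ℕ) (hf : IsPartition f) (hfl : HasLength f n) (hg : IsPartition g)
    (hgl : HasLength g (n - 1)) (hsub : ∀ i, g i ≤ f i) :
    bcoef u g / bcoef u f *
        (∑ᶠ (β : ℕ → ℕ)
          (_ : IsPartition β ∧ (∀ i, g i ≤ β i) ∧ IsHStrip f β ∧ (∀ i, n - 1 ≤ i → β i = 0)),
          phiStrip u f β * u ^ (psize β - psize g) * sk u β g) =
      u ^ (∑ j ∈ Icc 1 (f 0), (conj f j - conj g j).choose 2) *
        ∏ j ∈ Icc 1 (f 0),
          gauss u ((conj f j : ℤ) - conj g (j + 1)) ((conj f j : ℤ) - conj f (j + 1)) := by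
  have ha : ∀ j, 1 ≤ j → conj f (j + 1) ≤ conj f j := fun j hj =>
    hf.conj_le_conj_of_le hj (Nat.le_succ j)
  have hb : ∀ j, 1 ≤ j → conj g (j + 1) ≤ conj g j := fun j hj =>
    hg.conj_le_conj_of_le hj (Nat.le_succ j)
  have hba : ∀ j, 1 ≤ j → conj g j ≤ conj f j := fun j hj => hf.conj_le_conj hg hsub hj
  have hJ : conj f (f 0 + 1) = 0 := hf.conj_eq_zero (Nat.lt_succ_self _)
  have h1 : conj f 1 - conj g 1 = 1 := by rw [hfl.conj_one hf, hgl.conj_one hg]; omega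
  rw [finsum_summand_eq_transferSum u hn hf hfl hg hgl hsub,
    transferSum_eq_prod hu ha hb hba hJ le_rfl (hfl.1 0 (by omega)) true,
    hg.bcoef_eq_prod_Icc u (hsub 0), bcoef, prod_div_mul_transfer_eq hu h1 (by rw [hJ]; omega)]
  refine congrArg _ (prod_congr rfl fun k hk => ?_)
  have hk := (mem_Icc.mp hk).1
  have := ha k hk; have := hba (k + 1) (by omega)
  rw [← Nat.cast_sub (by omega), ← Nat.cast_sub (ha k hk), gauss_natCast u (by omega),
    show conj f k - conj g (k + 1) - (conj f k - conj f (k + 1)) =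
      conj f (k + 1) - conj g (k + 1) by omega]

theorem not_isOfFinOrder_X_sq : ¬IsOfFinOrder ((RatFunc.X : RatFunc ℚ) ^ 2) := by
  rw [isOfFinOrder_iff_pow_eq_one]
  rintro ⟨m, hm, h⟩
  rw [← pow_mul, ← RatFunc.algebraMap_X, ← map_pow,
    ← map_one (algebraMap (Polynomial ℚ) (RatFunc ℚ))] at h
  have := congrArg Polynomial.natDegree (RatFunc.algebraMap_injective ℚ h)
  simp at this
  omega

/-- For partitions `λ` of length `n ≥ 1` and `μ ⊆ λ` of length `n-1`, in `ℚ(t)`: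
`(b_μ(t²)/b_λ(t²)) Σ_β φ_{λ/β}(t²) t^{2(|β|-|μ|)} sk_{β/μ}(t²)
   = t^{2 Σ_j C(λ'_j - μ'_j, 2)} ∏_{j≥1} binom(λ'_j - μ'_{j+1}, λ'_j - λ'_{j+1})_{t²}`,
the sum being over all partitions `β` with `μ ⊆ β`, `λ/β` a horizontal strip and
`l(β) ≤ n-1`.  The left side is the `q → 0` limit of the Gelfand–Tsetlin branching
coefficient `c_{λ,μ}(q,t)`; the right side is its closed product form. -/
theorem stmt5 (n : ℕ) (hn : 1 ≤ n) (f g : ℕ → ℕ)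
    (hf : IsPartition f) (hfl : HasLength f n)
    (hg : IsPartition g) (hgl : HasLength g (n - 1))
    (hsub : ∀ i, g i ≤ f i) :
    bcoef ((RatFunc.X : RatFunc ℚ) ^ 2) g / bcoef ((RatFunc.X : RatFunc ℚ) ^ 2) f *
        (∑ᶠ (β : ℕ → ℕ)
          (_ : IsPartition β ∧ (∀ i, g i ≤ β i) ∧ IsHStrip f β ∧ (∀ i, n - 1 ≤ i → β i = 0)),
          phiStrip ((RatFunc.X : RatFunc ℚ) ^ 2) f β *
            ((RatFunc.X : RatFunc ℚ) ^ 2) ^ (psize β - psize g) *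
            sk ((RatFunc.X : RatFunc ℚ) ^ 2) β g)
      = ((RatFunc.X : RatFunc ℚ) ^ 2) ^
            (∑ j ∈ Finset.Icc 1 (f 0), Nat.choose (conj f j - conj g j) 2) *
          ∏ j ∈ Finset.Icc 1 (f 0),
            gauss ((RatFunc.X : RatFunc ℚ) ^ 2)
              ((conj f j : ℤ) - (conj g (j + 1) : ℤ))
              ((conj f j : ℤ) - (conj f (j + 1) : ℤ)) :=
  branching_coefficient_eq not_isOfFinOrder_X_sq n hn f g hf hfl hg hgl hsub

end EK
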